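/- arXiv:1910.10752 — 5 statements merged into one kernel-verified Lean document; each statement's English description precedes it below -/
import Mathlib

section
/- Let p be a prime number and let (a_k)_{k∈ℕ} be a sequence in ℤ_p with a_k → 0 p-adically as k → ∞. If some a_k is nonzero, then the set of x ∈ ℤ_p such that Σ_{k=0}^∞ a_k·x^k = 0 is finite. -/
/-!
Strassmann's argument: if every coefficient after `a N` is strictly smaller than `a N`, the series
has at most `N` zeros in the closed unit ball. For `N = 0` the constant term dominates, so
`‖f x‖ = ‖a 0‖ ≠ 0`. Otherwise, for a zero `x₀` write `f x = (x - x₀) g x`; the coefficient of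
`x ^ (N - 1)` in `g` has norm `‖a N‖` and all later ones are smaller, so by induction `g` has at
most `N - 1` zeros. Since `a k → 0`, such an `N` exists as soon as some `a k ≠ 0`.
-/

open Filter Topology Finset

section Norm

variable {E : Type*} [SeminormedAddCommGroup E] {f : ℕ → E}

lemma finite_setOf_le_norm_of_tendsto_zero (hf : Tendsto f atTop (𝓝 0)) {r : ℝ} (hr : 0 < r) :
    {k | r ≤ ‖f k‖}.Finite := by
  rw [← Nat.cofinite_eq_atTop] at hf
  simpa only [not_lt] using eventually_cofinite.mp
    ((tendsto_zero_iff_norm_tendsto_zero.mp hf).eventually (gt_mem_nhds hr))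

lemma exists_forall_norm_le_of_tendsto_zero (hf : Tendsto f atTop (𝓝 0)) :
    ∃ m, ∀ k, ‖f k‖ ≤ ‖f m‖ := by
  by_cases! h : ∀ k, ‖f k‖ ≤ 0
  · exact ⟨0, fun k => (h k).trans (norm_nonneg _)⟩
  obtain ⟨k₀, hk₀⟩ := h
  obtain ⟨m, hm, hmax⟩ := Set.exists_max_image _ (‖f ·‖)
    (finite_setOf_le_norm_of_tendsto_zero hf hk₀) ⟨k₀, le_refl ‖f k₀‖⟩
  refine ⟨m, fun k => ?_⟩
  by_cases hk : ‖f k₀‖ ≤ ‖f k‖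
  · exact hmax k hk
  · exact (not_le.mp hk).le.trans hm

lemma IsUltrametricDist.norm_tsum_lt [IsUltrametricDist E] (hf : Tendsto f atTop (𝓝 0)) {C : ℝ}
    (h : ∀ k, ‖f k‖ < C) : ‖∑' k, f k‖ < C := by
  obtain ⟨m, hm⟩ := exists_forall_norm_le_of_tendsto_zero hf
  exact (norm_tsum_le_of_forall_le hm).trans_lt (h m)

end Norm

lemma exists_forall_norm_lt_of_tendsto_zero {E : Type*} [NormedAddCommGroup E] {f : ℕ → E}
    (hf : Tendsto f atTop (𝓝 0)) (hne : ∃ k, f k ≠ 0) : ∃ N, ∀ k, N < k → ‖f k‖ < ‖f N‖ := by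
  obtain ⟨k₀, hk₀⟩ := hne
  obtain ⟨N, hN, hmax⟩ := Set.exists_max_image _ id
    (finite_setOf_le_norm_of_tendsto_zero hf (norm_pos_iff.mpr hk₀)) ⟨k₀, le_refl ‖f k₀‖⟩
  exact ⟨N, fun k hk => (not_le.mp fun hkS => (hmax k hkS).not_gt hk).trans_le hN⟩

lemma sub_mul_sum_antidiagonal_pow_mul_pow {R : Type*} [CommRing R] (x y : R) (n : ℕ) :
    (x - y) * ∑ q ∈ antidiagonal n, x ^ q.1 * y ^ q.2 = x ^ (n + 1) - y ^ (n + 1) := by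
  rw [Nat.sum_antidiagonal_eq_sum_range_succ_mk, ← (Commute.all x y).mul_geom_sum₂]
  simp

section SeminormedRing

variable {R : Type*} [SeminormedRing R] [NormOneClass R] {a : ℕ → R} {x : R}

lemma norm_mul_pow_le (c : R) (hx : ‖x‖ ≤ 1) (k : ℕ) : ‖c * x ^ k‖ ≤ ‖c‖ :=
  (norm_mul_le _ _).trans <| mul_le_of_le_one_right (norm_nonneg c) <|
    (norm_pow_le x k).trans (pow_le_one₀ (norm_nonneg x) hx)

lemma tendsto_mul_pow_zero (ha : Tendsto a atTop (𝓝 0)) (hx : ‖x‖ ≤ 1) :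
    Tendsto (fun k => a k * x ^ k) atTop (𝓝 0) :=
  squeeze_zero_norm (fun k => norm_mul_pow_le (a k) hx k) (tendsto_zero_iff_norm_tendsto_zero.mp ha)

end SeminormedRing

/-- The coefficients of the power series `(f x - f x₀) / (x - x₀)`, where `f x = ∑ a k * x ^ k`. -/
noncomputable def quotCoeff {R : Type*} [Semiring R] [TopologicalSpace R] (a : ℕ → R) (x₀ : R)
    (j : ℕ) : R :=
  ∑' i, a (i + (j + 1)) * x₀ ^ i

section PowerSeries

variable {R : Type*} [NormedCommRing R] [NormOneClass R] [IsUltrametricDist R] {a : ℕ → R}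
  {x x₀ : R}

lemma norm_quotCoeff_lt (ha : Tendsto a atTop (𝓝 0)) (hx₀ : ‖x₀‖ ≤ 1) {C : ℝ} {m j : ℕ}
    (hj : m ≤ j + 1) (h : ∀ k, m ≤ k → ‖a k‖ < C) : ‖quotCoeff a x₀ j‖ < C :=
  IsUltrametricDist.norm_tsum_lt
    (tendsto_mul_pow_zero (ha.comp (tendsto_add_atTop_nat (j + 1))) hx₀)
    fun i => (norm_mul_pow_le _ hx₀ i).trans_lt (h (i + (j + 1)) (by omega))

lemma tendsto_quotCoeff (ha : Tendsto a atTop (𝓝 0)) (hx₀ : ‖x₀‖ ≤ 1) :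
    Tendsto (quotCoeff a x₀) atTop (𝓝 0) := by
  refine NormedAddGroup.tendsto_nhds_zero.mpr fun ε hε => ?_
  obtain ⟨K, hK⟩ := eventually_atTop.mp (NormedAddGroup.tendsto_nhds_zero.mp ha ε hε)
  filter_upwards [eventually_ge_atTop K] with j hj
  exact norm_quotCoeff_lt ha hx₀ (by omega) hK

variable [CompleteSpace R]

lemma summable_mul_pow (ha : Tendsto a atTop (𝓝 0)) (hx : ‖x‖ ≤ 1) :
    Summable (fun k => a k * x ^ k) :=
  NonarchimedeanAddGroup.summable_of_tendsto_cofinite_zero <|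
    Nat.cofinite_eq_atTop ▸ tendsto_mul_pow_zero ha hx

lemma norm_tsum_mul_pow_eq (ha : Tendsto a atTop (𝓝 0)) (hx : ‖x‖ ≤ 1)
    (hlt : ∀ k, 0 < k → ‖a k‖ < ‖a 0‖) : ‖∑' k, a k * x ^ k‖ = ‖a 0‖ := by
  have htail : ‖∑' k, a (k + 1) * x ^ (k + 1)‖ < ‖a 0‖ :=
    IsUltrametricDist.norm_tsum_lt ((tendsto_mul_pow_zero ha hx).comp (tendsto_add_atTop_nat 1))
      fun k => (norm_mul_pow_le _ hx _).trans_lt (hlt _ k.succ_pos)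
  rw [(summable_mul_pow ha hx).tsum_eq_zero_add, pow_zero, mul_one,
    IsUltrametricDist.norm_add_eq_max_of_norm_ne_norm htail.ne', max_eq_left htail.le]

lemma norm_quotCoeff_eq (ha : Tendsto a atTop (𝓝 0)) (hx₀ : ‖x₀‖ ≤ 1) {j : ℕ}
    (hlt : ∀ k, j + 1 < k → ‖a k‖ < ‖a (j + 1)‖) : ‖quotCoeff a x₀ j‖ = ‖a (j + 1)‖ := by
  have := norm_tsum_mul_pow_eq (ha.comp (tendsto_add_atTop_nat (j + 1))) hx₀
    fun k hk => by simpa using hlt (k + (j + 1)) (by omega)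
  simpa only [quotCoeff, Function.comp_apply, zero_add] using this

lemma summable_prod_mul_pow_mul_pow (ha : Tendsto a atTop (𝓝 0)) (hx : ‖x‖ ≤ 1) (hx₀ : ‖x₀‖ ≤ 1) :
    Summable fun q : ℕ × ℕ => a (q.2 + (q.1 + 1)) * x₀ ^ q.2 * x ^ q.1 := by
  have hidx : Tendsto (fun q : ℕ × ℕ => q.2 + (q.1 + 1)) cofinite atTop := by
    rw [← Nat.cofinite_eq_atTop]
    refine Tendsto.cofinite_of_finite_preimage_singleton fun n =>
      ((Set.finite_Iic n).prod (Set.finite_Iic n)).subset ?_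
    rintro ⟨i, j⟩ h
    simp only [Set.mem_preimage, Set.mem_singleton_iff] at h
    simp only [Set.mem_prod, Set.mem_Iic]
    omega
  refine NonarchimedeanAddGroup.summable_of_tendsto_cofinite_zero <| squeeze_zero_norm
    (fun q => (norm_mul_pow_le _ hx _).trans (norm_mul_pow_le _ hx₀ _))
    (tendsto_zero_iff_norm_tendsto_zero.mp (ha.comp hidx))

theorem tsum_mul_pow_sub_tsum_mul_pow (ha : Tendsto a atTop (𝓝 0)) (hx : ‖x‖ ≤ 1)
    (hx₀ : ‖x₀‖ ≤ 1) :
    ∑' k, a k * x ^ k - ∑' k, a k * x₀ ^ k = (x - x₀) * ∑' j, quotCoeff a x₀ j * x ^ j := by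
  set G : ℕ × ℕ → R := fun q => a (q.2 + (q.1 + 1)) * x₀ ^ q.2 * x ^ q.1
  have hG : HasSum G (∑' q, G q) := (summable_prod_mul_pow_mul_pow ha hx hx₀).hasSum
  have hrows : HasSum (fun j => quotCoeff a x₀ j * x ^ j) (∑' q, G q) :=
    hG.prod_fiberwise fun j =>
      (summable_mul_pow (ha.comp (tendsto_add_atTop_nat (j + 1))) hx₀).hasSum.mul_right _
  have hdiag : HasSum (fun n => a (n + 1) * ∑ q ∈ antidiagonal n, x ^ q.1 * x₀ ^ q.2)
      (∑' q, G q) := by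
    refine ((HasAntidiagonal.sigmaAntidiagonalEquivProd.hasSum_iff.mpr hG).sigma
      fun n => hasSum_fintype _).congr_fun fun n => ?_
    rw [Finset.mul_sum, ← Finset.sum_coe_sort (antidiagonal n)]
    refine Fintype.sum_congr _ _ fun ⟨q, hq⟩ => ?_
    rw [HasAntidiagonal.mem_antidiagonal] at hq
    show _ = G q
    simp only [G, show q.2 + (q.1 + 1) = n + 1 by omega]
    ring
  have hdiff : HasSum (fun n => a (n + 1) * (x ^ (n + 1) - x₀ ^ (n + 1)))
      (∑' k, a k * x ^ k - ∑' k, a k * x₀ ^ k) := by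
    simpa [mul_sub] using (hasSum_nat_add_iff' 1).mpr
      ((summable_mul_pow ha hx).hasSum.sub (summable_mul_pow ha hx₀).hasSum)
  rw [hrows.tsum_eq]
  refine hdiff.unique ?_
  simpa only [mul_left_comm (x - x₀), sub_mul_sum_antidiagonal_pow_mul_pow] using
    hdiag.mul_left (x - x₀)

end PowerSeries

section Strassmann

variable {R : Type*} [NormedCommRing R] [NormOneClass R] [IsUltrametricDist R] [CompleteSpace R]
  [NoZeroDivisors R] {a : ℕ → R}

lemma zeros_subset_insert_zeros_quotCoeff (ha : Tendsto a atTop (𝓝 0)) {x₀ : R} (hx₀ : ‖x₀‖ ≤ 1)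
    (hfx₀ : ∑' k, a k * x₀ ^ k = 0) :
    {x : R | ‖x‖ ≤ 1 ∧ ∑' k, a k * x ^ k = 0} ⊆
      insert x₀ {x | ‖x‖ ≤ 1 ∧ ∑' j, quotCoeff a x₀ j * x ^ j = 0} := by
  rintro x ⟨hx, hfx⟩
  have h := tsum_mul_pow_sub_tsum_mul_pow ha hx hx₀
  rw [hfx, hfx₀, sub_zero, eq_comm, mul_eq_zero, sub_eq_zero] at h
  exact h.imp_right (⟨hx, ·⟩)

theorem encard_zeros_tsum_mul_pow_le {N : ℕ} (ha : Tendsto a atTop (𝓝 0))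
    (hlt : ∀ k, N < k → ‖a k‖ < ‖a N‖) :
    {x : R | ‖x‖ ≤ 1 ∧ ∑' k, a k * x ^ k = 0}.encard ≤ N := by
  induction N generalizing a with
  | zero =>
    refine (Set.encard_eq_zero.mpr (Set.eq_empty_of_forall_notMem ?_)).le
    rintro x ⟨hx, hfx⟩
    have := norm_tsum_mul_pow_eq ha hx hlt
    rw [hfx, norm_zero] at this
    exact (norm_nonneg _).not_gt (this ▸ hlt 1 one_pos)
  | succ M ih =>
    obtain hempty | ⟨x₀, hx₀, hfx₀⟩ := Set.eq_empty_or_nonempty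
      {x : R | ‖x‖ ≤ 1 ∧ ∑' k, a k * x ^ k = 0}
    · simp [hempty]
    have hquot := ih (tendsto_quotCoeff ha hx₀) fun j hj => by
      rw [norm_quotCoeff_eq ha hx₀ hlt]
      exact norm_quotCoeff_lt ha hx₀ (by omega) hlt
    calc _ ≤ (insert x₀ {x | ‖x‖ ≤ 1 ∧ ∑' j, quotCoeff a x₀ j * x ^ j = 0}).encard :=
          Set.encard_le_encard (zeros_subset_insert_zeros_quotCoeff ha hx₀ hfx₀)
      _ ≤ _ + 1 := Set.encard_insert_le _ _
      _ ≤ M + 1 := by gcongr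
      _ = (M + 1 : ℕ) := by norm_cast

end Strassmann

/-- The one-variable claim of Section 5 of the paper: a nonzero restricted
(i.e. convergent on `ℤ_p`) power series over `ℤ_p` has only finitely many
zeros in `ℤ_p`. -/
theorem padic_power_series_finite_zeros (p : ℕ) [Fact p.Prime] (a : ℕ → ℤ_[p])
    (ha : Filter.Tendsto a Filter.atTop (nhds 0))
    (hne : ∃ k, a k ≠ 0) :
    {x : ℤ_[p] | ∑' k : ℕ, a k * x ^ k = 0}.Finite := by
  obtain ⟨N, hN⟩ := exists_forall_norm_lt_of_tendsto_zero ha hne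
  have h := encard_zeros_tsum_mul_pow_le ha hN
  simp only [PadicInt.norm_le_one, true_and] at h
  exact Set.finite_of_encard_le_coe h
end

section
/- Let p be a prime number, n ∈ ℕ, and let (a_I)_{I∈ℕⁿ} be a family in ℤ_p such that for every m ∈ ℕ one has a_I ∈ p^m ℤ_p for all but finitely many multi-indices I. If Σ_{I∈ℕⁿ} a_I·x^I = 0 for every x ∈ ℤ_pⁿ, then a_I = 0 for all I. In other words, the evaluation map from restricted power series over ℤ_p in n variables to functions ℤ_pⁿ → ℤ_p is injective. -/
open Filter

section aux

variable {p : ℕ} [Fact p.Prime]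

private lemma padic_dvd_iff_norm_le (m : ℕ) (x : ℤ_[p]) :
    (p : ℤ_[p]) ^ m ∣ x ↔ ‖x‖ ≤ (p : ℝ) ^ (-(m : ℤ)) := by
  rw [PadicInt.norm_le_pow_iff_mem_span_pow, Ideal.mem_span_singleton]

private lemma padic_pow_dvd_tsum {ι : Type*} (m : ℕ) (f : ι → ℤ_[p])
    (h : ∀ i, (p : ℤ_[p]) ^ m ∣ f i) : (p : ℤ_[p]) ^ m ∣ ∑' i, f i := by
  by_cases hf : Summable f
  · have hset : {x : ℤ_[p] | (p : ℤ_[p]) ^ m ∣ x} =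
        {x : ℤ_[p] | ‖x‖ ≤ (p : ℝ) ^ (-(m : ℤ))} :=
      Set.ext fun x => padic_dvd_iff_norm_le m x
    have hcl : IsClosed {x : ℤ_[p] | (p : ℤ_[p]) ^ m ∣ x} := by
      rw [hset]; exact isClosed_le continuous_norm continuous_const
    exact hcl.mem_of_tendsto hf.hasSum
      (Filter.Eventually.of_forall fun s => Finset.dvd_sum fun i _ => h i)
  · rw [tsum_eq_zero_of_not_summable hf]; exact dvd_zero _

private lemma padic_eq_zero_of_forall_pow_dvd (x : ℤ_[p])
    (h : ∀ m : ℕ, (p : ℤ_[p]) ^ m ∣ x) : x = 0 := by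
  have hp1 : (1 : ℝ) < p := Nat.one_lt_cast.mpr (Fact.out (p := p.Prime)).one_lt
  by_contra hx
  have hxpos : 0 < ‖x‖ := norm_pos_iff.mpr hx
  obtain ⟨m, hm⟩ := exists_pow_lt_of_lt_one hxpos (inv_lt_one_of_one_lt₀ hp1)
  have hle : ‖x‖ ≤ (p : ℝ) ^ (-(m : ℤ)) := (padic_dvd_iff_norm_le m x).mp (h m)
  rw [zpow_neg, zpow_natCast, ← inv_pow] at hle
  exact absurd (hle.trans_lt hm) (lt_irrefl _)

private lemma padic_summable_aux {ι : Type*} (f : ι → ℤ_[p])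
    (h : ∀ m : ℕ, {i | ¬ (p : ℤ_[p]) ^ m ∣ f i}.Finite) : Summable f := by
  refine NonarchimedeanAddGroup.summable_of_tendsto_cofinite_zero ?_
  have hp1 : (1 : ℝ) < p := Nat.one_lt_cast.mpr (Fact.out (p := p.Prime)).one_lt
  rw [Filter.tendsto_def]
  intro s hs
  obtain ⟨ε, hε, hsub⟩ := Metric.mem_nhds_iff.mp hs
  obtain ⟨m, hm⟩ := exists_pow_lt_of_lt_one hε (inv_lt_one_of_one_lt₀ hp1)
  rw [Filter.mem_cofinite]
  refine ((h m).subset ?_)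
  intro i hi
  simp only [Set.mem_compl_iff, Set.mem_preimage] at hi
  intro hdvd
  apply hi
  apply hsub
  rw [Metric.mem_ball, dist_zero_right]
  have hle : ‖f i‖ ≤ (p : ℝ) ^ (-(m : ℤ)) := (padic_dvd_iff_norm_le m (f i)).mp hdvd
  rw [zpow_neg, zpow_natCast, ← inv_pow] at hle
  exact hle.trans_lt hm

private lemma padic_one_var (b : ℕ → ℤ_[p])
    (hb : ∀ m : ℕ, {k | ¬ (p : ℤ_[p]) ^ m ∣ b k}.Finite)
    (h : ∀ x : ℤ_[p], ∑' k, b k * x ^ k = 0) : ∀ k, b k = 0 := by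
  intro k
  induction k using Nat.strong_induction_on with
  | _ k ih =>
  apply padic_eq_zero_of_forall_pow_dvd
  intro t
  set f : ℕ → ℤ_[p] := fun j => b j * ((p : ℤ_[p]) ^ t) ^ j with hf_def
  have hfs : Summable f := by
    refine padic_summable_aux f fun m => (hb m).subset fun j hj => ?_
    simp only [Set.mem_setOf_eq] at hj ⊢
    exact fun hd => hj (hd.mul_right _)
  have hx := h ((p : ℤ_[p]) ^ t)
  rw [Summable.tsum_eq_add_tsum_ite hfs k] at hx
  have hdvd : (p : ℤ_[p]) ^ (t * k + t) ∣ ∑' j, if j = k then 0 else f j := by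
    refine padic_pow_dvd_tsum _ _ fun j => ?_
    rcases eq_or_ne j k with rfl | hjk
    · simp
    · rw [if_neg hjk]
      rcases lt_or_gt_of_ne hjk with hlt | hgt
      · rw [hf_def]; simp only; rw [ih j hlt, zero_mul]; exact dvd_zero _
      · have : (p : ℤ_[p]) ^ (t * k + t) ∣ ((p : ℤ_[p]) ^ t) ^ j := by
          rw [← pow_mul]
          exact pow_dvd_pow _ (by nlinarith)
        exact this.mul_left _
  have hfk : f k = -(∑' j, if j = k then 0 else f j) := by
    rw [eq_neg_iff_add_eq_zero]
    exact hx
  have h2 : (p : ℤ_[p]) ^ (t * k + t) ∣ f k := by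
    rw [hfk]; exact (dvd_neg).mpr hdvd
  obtain ⟨c, hc⟩ := h2
  have hpk : ((p : ℤ_[p]) ^ (t * k)) ≠ 0 :=
    pow_ne_zero _ (Nat.cast_ne_zero.mpr (Fact.out (p := p.Prime)).ne_zero)
  have hc' : b k * (p : ℤ_[p]) ^ (t * k) = ((p : ℤ_[p]) ^ t * c) * (p : ℤ_[p]) ^ (t * k) := by
    calc b k * (p : ℤ_[p]) ^ (t * k) = (p : ℤ_[p]) ^ (t * k + t) * c := by
          rw [pow_mul]; exact hc
      _ = ((p : ℤ_[p]) ^ t * c) * (p : ℤ_[p]) ^ (t * k) := by rw [pow_add]; ring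
  exact ⟨c, mul_right_cancel₀ hpk hc'⟩

end aux

/-- The evaluation map from restricted power series over `ℤ_p` in `n` variables
to functions `ℤ_pⁿ → ℤ_p` is injective: if all coefficient tend to `0`
`p`-adically (so that evaluation converges everywhere) and every evaluation
vanishes, then all coefficients vanish. -/
theorem restricted_power_series_eval_injective (p : ℕ) [Fact p.Prime] (n : ℕ)
    (a : (Fin n → ℕ) → ℤ_[p])
    (ha : ∀ m : ℕ, {I : Fin n → ℕ | ¬ (p : ℤ_[p]) ^ m ∣ a I}.Finite)
    (hzero : ∀ x : Fin n → ℤ_[p], ∑' I : Fin n → ℕ, a I * ∏ i, x i ^ I i = 0) :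
    ∀ I, a I = 0 := by
  induction n with
  | zero =>
    intro I
    have h0 := hzero 0
    rw [tsum_eq_single I (fun J hJ => absurd (Subsingleton.elim J I) hJ)] at h0
    simpa using h0
  | succ n IH =>
    intro I
    -- the curried coefficients
    set c : ℕ → (Fin n → ℕ) → ℤ_[p] := fun k J => a (Fin.cons k J) with hc_def
    have key : ∀ k : ℕ, ∀ x' : Fin n → ℤ_[p],
        ∑' J : Fin n → ℕ, c k J * ∏ i, x' i ^ J i = 0 := by
      intro k x'
      -- fix x', vary the first coordinate
      have main : ∀ x0 : ℤ_[p],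
          ∑' k' : ℕ, (∑' J : Fin n → ℕ, c k' J * ∏ i, x' i ^ J i) * x0 ^ k' = 0 := by
        intro x0
        set x : Fin (n + 1) → ℤ_[p] := Fin.cons x0 x' with hx_def
        set e : ℕ × (Fin n → ℕ) ≃ (Fin (n + 1) → ℕ) := Fin.consEquiv (fun _ => ℕ)
          with he_def
        have he : ∀ q : ℕ × (Fin n → ℕ), e q = Fin.cons q.1 q.2 := fun q => by
          rw [he_def]; rfl
        set F : ℕ × (Fin n → ℕ) → ℤ_[p] :=
          fun q => a (Fin.cons q.1 q.2) * ∏ i, x i ^ (Fin.cons q.1 q.2 : Fin (n+1) → ℕ) i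
          with hF_def
        have hFs : Summable F := by
          refine padic_summable_aux F fun m => ?_
          refine ((ha m).preimage (e.injective.injOn)).subset fun q hq => ?_
          simp only [Set.mem_setOf_eq, Set.mem_preimage, he] at hq ⊢
          exact fun hd => hq (hd.mul_right _)
        have hFsum : ∑' q : ℕ × (Fin n → ℕ), F q = 0 := by
          have hz := hzero x
          rw [← e.tsum_eq (fun I => a I * ∏ i, x i ^ I i)] at hz
          rw [← hz]
          exact tsum_congr fun q => by rw [hF_def, he]
        have hprod : ∀ q : ℕ × (Fin n → ℕ),
            F q = (c q.1 q.2 * ∏ i, x' i ^ q.2 i) * x0 ^ q.1 := by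
          intro q
          rw [hF_def]
          simp only [hc_def]
          rw [Fin.prod_univ_succ]
          simp only [Fin.cons_zero, Fin.cons_succ, hx_def]
          ring
        rw [Summable.tsum_prod' hFs (fun k' => hFs.prod_factor k')] at hFsum
        have hinner : ∀ k' : ℕ, ∑' J : Fin n → ℕ, F (k', J) =
            (∑' J : Fin n → ℕ, c k' J * ∏ i, x' i ^ J i) * x0 ^ k' := by
          intro k'
          have hgs : Summable (fun J : Fin n → ℕ => c k' J * ∏ i, x' i ^ J i) := by
            refine padic_summable_aux _ fun m => ?_
            have hEq : {J : Fin n → ℕ | ¬ (p : ℤ_[p]) ^ m ∣ c k' J * ∏ i, x' i ^ J i} ⊆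
                (fun J : Fin n → ℕ => Fin.cons k' J) ⁻¹' {I | ¬ (p : ℤ_[p]) ^ m ∣ a I} := by
              intro J hJ
              simp only [Set.mem_setOf_eq, Set.mem_preimage] at hJ ⊢
              exact fun hd => hJ (Dvd.dvd.mul_right hd _)
            exact ((ha m).preimage ((Fin.cons_right_injective
              (α := fun _ : Fin (n + 1) => ℕ) k').injOn)).subset hEq
          calc ∑' J : Fin n → ℕ, F (k', J)
              = ∑' J : Fin n → ℕ, (c k' J * ∏ i, x' i ^ J i) * x0 ^ k' :=
                tsum_congr fun J => hprod (k', J)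
            _ = (∑' J : Fin n → ℕ, c k' J * ∏ i, x' i ^ J i) * x0 ^ k' :=
                hgs.tsum_mul_right _
        simp only [hinner] at hFsum
        exact hFsum
      -- apply the one-variable result
      have hbfin : ∀ m : ℕ,
          {k' : ℕ | ¬ (p : ℤ_[p]) ^ m ∣ ∑' J : Fin n → ℕ, c k' J * ∏ i, x' i ^ J i}.Finite := by
        intro m
        refine (((ha m).image (fun I => I 0)).subset ?_)
        intro k' hk'
        simp only [Set.mem_setOf_eq] at hk'
        by_contra hmem
        apply hk'
        refine padic_pow_dvd_tsum _ _ fun J => ?_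
        have : (p : ℤ_[p]) ^ m ∣ c k' J := by
          by_contra hd
          exact hmem ⟨Fin.cons k' J, hd, Fin.cons_zero _ _⟩
        exact this.mul_right _
      exact padic_one_var _ hbfin main k
    -- apply the induction hypothesis to each c k
    have hck : ∀ k : ℕ, ∀ J : Fin n → ℕ, c k J = 0 := by
      intro k
      refine IH (c k) (fun m => ?_) (key k)
      have hEq : {J : Fin n → ℕ | ¬ (p : ℤ_[p]) ^ m ∣ c k J} =
          (fun J : Fin n → ℕ => Fin.cons k J) ⁻¹' {I | ¬ (p : ℤ_[p]) ^ m ∣ a I} := rfl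
      rw [hEq]
      exact (ha m).preimage ((Fin.cons_right_injective
        (α := fun _ : Fin (n + 1) => ℕ) k).injOn)
    have : I = Fin.cons (I 0) (Fin.tail I) := (Fin.cons_self_tail I).symm
    rw [this]
    exact hck (I 0) (Fin.tail I)
end

section
/- Let p be a prime number, n ∈ ℕ, and let f = Σ_{I∈ℕⁿ} a_I z^I be a restricted power series over ℤ_p in n variables. Then the evaluation function ℤ_pⁿ → ℤ_p, x ↦ Σ_{I∈ℕⁿ} a_I·x^I, is continuous. -/
open Filter

/-- Norm of a difference of finite products, ultrametric style. -/
private lemma prod_sub_prod_norm_le {p : ℕ} [Fact p.Prime] {ι : Type*} (s : Finset ι)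
    (f g : ι → ℤ_[p]) {C : ℝ} (hC : 0 ≤ C) (h : ∀ i ∈ s, ‖f i - g i‖ ≤ C) :
    ‖∏ i ∈ s, f i - ∏ i ∈ s, g i‖ ≤ C := by
  classical
  induction s using Finset.induction_on with
  | empty => simpa using hC
  | @insert a0 s0 ha ih =>
    rw [Finset.prod_insert ha, Finset.prod_insert ha]
    have key : f a0 * ∏ i ∈ s0, f i - g a0 * ∏ i ∈ s0, g i
        = f a0 * (∏ i ∈ s0, f i - ∏ i ∈ s0, g i) + (f a0 - g a0) * ∏ i ∈ s0, g i := by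
      ring
    rw [key]
    refine (IsUltrametricDist.norm_add_le_max _ _).trans (max_le ?_ ?_)
    · calc ‖f a0 * (∏ i ∈ s0, f i - ∏ i ∈ s0, g i)‖
          ≤ ‖f a0‖ * ‖∏ i ∈ s0, f i - ∏ i ∈ s0, g i‖ := norm_mul_le _ _
        _ ≤ 1 * C := by
            exact mul_le_mul (PadicInt.norm_le_one _)
              (ih fun i hi => h i (Finset.mem_insert_of_mem hi)) (norm_nonneg _) zero_le_one
        _ = C := one_mul C
    · calc ‖(f a0 - g a0) * ∏ i ∈ s0, g i‖
          ≤ ‖f a0 - g a0‖ * ‖∏ i ∈ s0, g i‖ := norm_mul_le _ _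
        _ ≤ C * 1 := mul_le_mul (h a0 (Finset.mem_insert_self _ _))
              (PadicInt.norm_le_one _) (norm_nonneg _) hC
        _ = C := mul_one C

private lemma summable_eval {p : ℕ} [Fact p.Prime] {n : ℕ} (a : (Fin n → ℕ) → ℤ_[p])
    (ha : ∀ m : ℕ, {I : Fin n → ℕ | ¬ (p : ℤ_[p]) ^ m ∣ a I}.Finite) (x : Fin n → ℤ_[p]) :
    Summable (fun I : Fin n → ℕ => a I * ∏ i, x i ^ I i) := by
  apply NonarchimedeanAddGroup.summable_of_tendsto_cofinite_zero
  rw [NormedAddCommGroup.tendsto_nhds_zero]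
  intro ε hε
  have hp1 : (1 : ℝ) < p := by exact_mod_cast (Fact.out : p.Prime).one_lt
  obtain ⟨m, hm⟩ := exists_pow_lt_of_lt_one hε (by
    rw [div_lt_one (by linarith)]; linarith : (1 : ℝ) / p < 1)
  rw [Filter.eventually_cofinite]
  apply Set.Finite.subset (ha m)
  intro I hI
  simp only [Set.mem_setOf_eq]
  intro hdvd
  apply hI
  calc ‖a I * ∏ i, x i ^ I i‖ ≤ ‖a I‖ * ‖∏ i, x i ^ I i‖ := norm_mul_le _ _
    _ ≤ ‖a I‖ * 1 := mul_le_mul_of_nonneg_left (PadicInt.norm_le_one _) (norm_nonneg _)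
    _ = ‖a I‖ := mul_one _
    _ ≤ (p : ℝ) ^ (-(m : ℤ)) := by
        rw [PadicInt.norm_le_pow_iff_mem_span_pow]
        exact Ideal.mem_span_singleton.mpr hdvd
    _ = ((1 : ℝ) / p) ^ m := by
        rw [zpow_neg, one_div, inv_pow, zpow_natCast]
    _ < ε := hm

/-- The evaluation function of a restricted power series over `ℤ_p` in `n`
variables is continuous on `ℤ_pⁿ`. -/
theorem restricted_power_series_eval_continuous (p : ℕ) [Fact p.Prime] (n : ℕ)
    (a : (Fin n → ℕ) → ℤ_[p])
    (ha : ∀ m : ℕ, {I : Fin n → ℕ | ¬ (p : ℤ_[p]) ^ m ∣ a I}.Finite) :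
    Continuous (fun x : Fin n → ℤ_[p] => ∑' I : Fin n → ℕ, a I * ∏ i, x i ^ I i) := by
  have key : LipschitzWith 1 (fun x : Fin n → ℤ_[p] =>
      ∑' I : Fin n → ℕ, a I * ∏ i, x i ^ I i) := by
    apply LipschitzWith.of_dist_le_mul
    intro x y
    simp only [NNReal.coe_one, one_mul, dist_eq_norm]
    rw [← Summable.tsum_sub (summable_eval a ha x) (summable_eval a ha y)]
    apply IsUltrametricDist.norm_tsum_le_of_forall_le_of_nonneg (norm_nonneg (x - y))
    intro I
    have hterm : a I * ∏ i, x i ^ I i - a I * ∏ i, y i ^ I i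
        = a I * (∏ i, x i ^ I i - ∏ i, y i ^ I i) := by ring
    rw [hterm]
    calc ‖a I * (∏ i, x i ^ I i - ∏ i, y i ^ I i)‖
        ≤ ‖a I‖ * ‖∏ i, x i ^ I i - ∏ i, y i ^ I i‖ := norm_mul_le _ _
      _ ≤ 1 * ‖x - y‖ := by
          refine mul_le_mul (PadicInt.norm_le_one _) ?_ (norm_nonneg _) zero_le_one
          refine prod_sub_prod_norm_le Finset.univ (fun i => x i ^ I i)
            (fun i => y i ^ I i) (norm_nonneg _) (fun i _ => ?_)
          obtain ⟨c, hc⟩ := sub_dvd_pow_sub_pow (x i) (y i) (I i)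
          rw [hc]
          calc ‖(x i - y i) * c‖ ≤ ‖x i - y i‖ * ‖c‖ := norm_mul_le _ _
            _ ≤ ‖x i - y i‖ * 1 :=
                mul_le_mul_of_nonneg_left (PadicInt.norm_le_one _) (norm_nonneg _)
            _ = dist (x i) (y i) := by rw [mul_one, dist_eq_norm]
            _ ≤ dist x y := dist_le_pi_dist x y i
            _ = ‖x - y‖ := dist_eq_norm x y
      _ = ‖x - y‖ := one_mul _
  exact key.continuous
end

section
/- Let p be a prime number and n, m ∈ ℕ. Call a function φ : ℤ_pⁿ → ℤ_p restricted-analytic if there exists a restricted power series f over ℤ_p in n variables with φ(x) = f(x) for all x ∈ ℤ_pⁿ. If F : ℤ_pⁿ → ℤ_p^m is a map all of whose m coordinate functions are restricted-analytic, and g : ℤ_p^m → ℤ_p is restricted-analytic, then the composition g ∘ F : ℤ_pⁿ → ℤ_p is restricted-analytic. -/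
/-- A family of coefficients indexed by multi-indices in `n` variables is
*restricted* if for every `m` all but finitely many coefficients are divisible
by `p^m`. -/
def IsRestricted (p : ℕ) [Fact p.Prime] {n : ℕ} (a : (Fin n → ℕ) → ℤ_[p]) : Prop :=
  ∀ m : ℕ, {I : Fin n → ℕ | ¬ (p : ℤ_[p]) ^ m ∣ a I}.Finite

/-- A function `ℤ_pⁿ → ℤ_p` is *restricted-analytic* if it is given by
evaluation of a restricted power series over `ℤ_p` in `n` variables. -/
def RestrictedAnalytic (p : ℕ) [Fact p.Prime] {n : ℕ}
    (φ : (Fin n → ℤ_[p]) → ℤ_[p]) : Prop :=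
  ∃ a : (Fin n → ℕ) → ℤ_[p], IsRestricted p a ∧
    ∀ x : Fin n → ℤ_[p], φ x = ∑' I : Fin n → ℕ, a I * ∏ i, x i ^ I i

/-!
Substituting the series `F_j = ∑_I a_{j,I} z^I` into `g = ∑_J b_J w^J` and expanding each power
`F_j ^ J_j` as a sum over `J_j`-tuples of multi-indices gives a single family indexed by an outer
multi-index together with such tuples. All coefficients in `ℤ_p` have norm at most `1`, so the
coefficients of this family tend to zero along the cofinite filter; as `ℤ_p` is complete and
non-archimedean, the family is unconditionally summable and may be regrouped by total degree.
By the ultrametric inequality the regrouped coefficients again tend to zero.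
-/

open Filter Topology

theorem prod_prod_pow_eq_prod_pow_sum {M ι : Type*} [CommMonoid M] {n : ℕ} (x : Fin n → M)
    (s : Finset ι) (I : ι → Fin n → ℕ) :
    ∏ k ∈ s, ∏ i, x i ^ I k i = ∏ i, x i ^ (∑ k ∈ s, I k) i := by
  simp only [Finset.sum_apply, ← Finset.prod_pow_eq_pow_sum]
  exact Finset.prod_comm

instance IsUltrametricDist.nonarchimedeanRing (R : Type*) [NormedRing R] [IsUltrametricDist R] :
    NonarchimedeanRing R where
  is_nonarchimedean := NonarchimedeanAddGroup.is_nonarchimedean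

section Nonarchimedean

variable {R : Type*} [CommRing R] [UniformSpace R] [IsUniformAddGroup R] [NonarchimedeanRing R]

theorem hasSum_pi_prod_of_nonarchimedean {k : ℕ} {κ : Fin k → Type*} {f : ∀ j, κ j → R}
    {a : Fin k → R} (hf : ∀ j, HasSum (f j) (a j)) :
    HasSum (fun d : ∀ j, κ j => ∏ j, f j (d j)) (∏ j, a j) := by
  induction k with
  | zero => simp
  | succ k ih =>
    rw [← (Fin.consEquiv κ).hasSum_iff, Fin.prod_univ_succ]
    convert (hf 0).mul_of_nonarchimedean (ih fun j => hf j.succ) using 1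
    ext ⟨i, d⟩
    simp [Fin.consEquiv, Fin.prod_univ_succ]

theorem HasSum.pow_of_nonarchimedean {ι : Type*} {f : ι → R} {a : R} (hf : HasSum f a) (k : ℕ) :
    HasSum (fun e : Fin k → ι => ∏ s, f (e s)) (a ^ k) := by
  simpa using hasSum_pi_prod_of_nonarchimedean fun _ : Fin k => hf

end Nonarchimedean

theorem Filter.Tendsto.tsum_fiberwise_cofinite {α β E : Type*} [SeminormedAddCommGroup E]
    [IsUltrametricDist E] {f : α → E} (hf : Tendsto f cofinite (𝓝 0)) (g : α → β) :
    Tendsto (fun K => ∑' t : g ⁻¹' {K}, f t) cofinite (𝓝 0) := by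
  simp only [Metric.nhds_basis_closedBall.tendsto_right_iff, eventually_cofinite,
    mem_closedBall_zero_iff] at hf ⊢
  intro ε hε
  refine ((hf ε hε).image g).subset fun K hK => ?_
  by_contra hK'
  refine hK (IsUltrametricDist.norm_tsum_le_of_forall_le_of_nonneg hε.le fun ⟨t, ht⟩ => ?_)
  by_contra htε
  exact hK' ⟨t, htε, ht⟩

namespace PadicInt

variable {p : ℕ} [Fact p.Prime]

theorem pow_dvd_iff_norm_le {z : ℤ_[p]} {m : ℕ} :
    (p : ℤ_[p]) ^ m ∣ z ↔ ‖z‖ ≤ (p : ℝ)⁻¹ ^ m := by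
  rw [inv_pow, ← zpow_natCast, ← zpow_neg, norm_le_pow_iff_mem_span_pow,
    Ideal.mem_span_singleton]

theorem tendsto_zero_iff_eventually_pow_dvd {α : Type*} {l : Filter α} {f : α → ℤ_[p]} :
    Tendsto f l (𝓝 0) ↔ ∀ m : ℕ, ∀ᶠ i in l, (p : ℤ_[p]) ^ m ∣ f i := by
  have hp : (1 : ℝ) < p := mod_cast (Fact.out : p.Prime).one_lt
  simp only [(Metric.nhds_basis_closedBall_pow (by positivity)
    (inv_lt_one_of_one_lt₀ hp)).tendsto_right_iff, mem_closedBall_zero_iff, pow_dvd_iff_norm_le,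
    forall_const]

theorem tendsto_mul_of_tendsto_zero {α : Type*} {l : Filter α} {f : α → ℤ_[p]}
    (hf : Tendsto f l (𝓝 0)) (g : α → ℤ_[p]) : Tendsto (fun i => f i * g i) l (𝓝 0) :=
  hf.zero_mul_isBoundedUnder_le (isBoundedUnder_of ⟨1, fun i => norm_le_one (g i)⟩)

theorem tendsto_sigma_mul_cofinite {α : Type*} {β : α → Type*} {b : α → ℤ_[p]}
    {h : ∀ a, β a → ℤ_[p]} (hb : Tendsto b cofinite (𝓝 0))
    (hh : ∀ a, Tendsto (h a) cofinite (𝓝 0)) :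
    Tendsto (fun t : Σ a, β a => b t.1 * h t.1 t.2) cofinite (𝓝 0) := by
  simp only [Metric.nhds_basis_closedBall.tendsto_right_iff, eventually_cofinite,
    mem_closedBall_zero_iff, not_le] at hb hh ⊢
  intro ε hε
  refine ((hb ε hε).biUnion fun a _ => (hh a ε hε).image (Sigma.mk a)).subset
    fun ⟨a, d⟩ (hε' : ε < _) => ?_
  rw [norm_mul] at hε'
  exact Set.mem_biUnion (hε'.trans_le (mul_le_of_le_one_right (norm_nonneg _) (norm_le_one _)))
    ⟨d, hε'.trans_le (mul_le_of_le_one_left (norm_nonneg _) (norm_le_one _)), rfl⟩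

end PadicInt

theorem isRestricted_iff_tendsto_cofinite {p : ℕ} [Fact p.Prime] {n : ℕ}
    (a : (Fin n → ℕ) → ℤ_[p]) : IsRestricted p a ↔ Tendsto a cofinite (𝓝 0) := by
  simp only [PadicInt.tendsto_zero_iff_eventually_pow_dvd, eventually_cofinite, IsRestricted]

namespace RestrictedAnalytic

open PadicInt

variable {p : ℕ} [Fact p.Prime] {n m : ℕ}

/-- A term of the expansion of `∑_J b_J ∏_j (∑_I a_{j,I} z^I) ^ J_j`: an outer multi-index `J`
and, for each `j`, the `J_j` multi-indices picked from the `J_j` factors `∑_I a_{j,I} z^I`. -/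
abbrev SubstIndex (n m : ℕ) := Σ J : Fin m → ℕ, ∀ j, Fin (J j) → Fin n → ℕ

def SubstIndex.degree (t : SubstIndex n m) : Fin n → ℕ := ∑ j, ∑ s, t.2 j s

noncomputable def substCoeff (b : (Fin m → ℕ) → ℤ_[p]) (a : Fin m → (Fin n → ℕ) → ℤ_[p])
    (t : SubstIndex n m) : ℤ_[p] :=
  b t.1 * ∏ j, ∏ s, a j (t.2 j s)

noncomputable def compCoeff (b : (Fin m → ℕ) → ℤ_[p]) (a : Fin m → (Fin n → ℕ) → ℤ_[p])
    (K : Fin n → ℕ) : ℤ_[p] :=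
  ∑' t : SubstIndex.degree ⁻¹' {K}, substCoeff b a t.1

variable {b : (Fin m → ℕ) → ℤ_[p]} {a : Fin m → (Fin n → ℕ) → ℤ_[p]}

theorem tendsto_substCoeff (hb : Tendsto b cofinite (𝓝 0))
    (ha : ∀ j, Tendsto (a j) cofinite (𝓝 0)) :
    Tendsto (substCoeff b a) cofinite (𝓝 0) := by
  have ha' (j : Fin m) : HasSum (a j) (∑' I, a j I) :=
    (NonarchimedeanAddGroup.summable_of_tendsto_cofinite_zero (ha j)).hasSum
  have hprod (J : Fin m → ℕ) :
      Tendsto (fun d : ∀ j, Fin (J j) → Fin n → ℕ => ∏ j, ∏ s, a j (d j s)) cofinite (𝓝 0) :=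
    (hasSum_pi_prod_of_nonarchimedean (κ := fun j => Fin (J j) → Fin n → ℕ)
      (f := fun j e => ∏ s, a j (e s)) fun j =>
      (ha' j).pow_of_nonarchimedean (J j)).summable.tendsto_cofinite_zero
  exact (tendsto_sigma_mul_cofinite hb hprod :)

theorem isRestricted_compCoeff (hb : Tendsto b cofinite (𝓝 0))
    (ha : ∀ j, Tendsto (a j) cofinite (𝓝 0)) : IsRestricted p (compCoeff b a) :=
  (isRestricted_iff_tendsto_cofinite _).mpr
    ((tendsto_substCoeff hb ha).tsum_fiberwise_cofinite SubstIndex.degree)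

theorem hasSum_substCoeff_mul_monomial (x : Fin n → ℤ_[p]) {y : Fin m → ℤ_[p]}
    (hy : ∀ j, HasSum (fun I => a j I * ∏ i, x i ^ I i) (y j)) (J : Fin m → ℕ) :
    HasSum (fun d => substCoeff b a ⟨J, d⟩ * ∏ i, x i ^ SubstIndex.degree ⟨J, d⟩ i)
      (b J * ∏ j, y j ^ J j) := by
  refine ((hasSum_pi_prod_of_nonarchimedean fun j =>
    (hy j).pow_of_nonarchimedean (J j)).mul_left (b J)).congr_fun fun d => ?_
  simp only [substCoeff, SubstIndex.degree, Finset.prod_mul_distrib, mul_assoc,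
    prod_prod_pow_eq_prod_pow_sum]

theorem hasSum_compCoeff_mul_monomial (hb : Tendsto b cofinite (𝓝 0))
    (ha : ∀ j, Tendsto (a j) cofinite (𝓝 0)) (x : Fin n → ℤ_[p]) {y : Fin m → ℤ_[p]}
    (hy : ∀ j, HasSum (fun I => a j I * ∏ i, x i ^ I i) (y j)) :
    HasSum (fun K => compCoeff b a K * ∏ i, x i ^ K i) (∑' J, b J * ∏ j, y j ^ J j) := by
  have hterm : HasSum (fun t : SubstIndex n m => substCoeff b a t * ∏ i, x i ^ t.degree i)
      (∑' J, b J * ∏ j, y j ^ J j) := by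
    have hsum : Summable fun t : SubstIndex n m => substCoeff b a t * ∏ i, x i ^ t.degree i :=
      NonarchimedeanAddGroup.summable_of_tendsto_cofinite_zero
        (tendsto_mul_of_tendsto_zero (tendsto_substCoeff hb ha) _)
    rw [(hsum.hasSum.sigma (hasSum_substCoeff_mul_monomial x hy)).tsum_eq]
    exact hsum.hasSum
  refine (hterm.tsum_fiberwise SubstIndex.degree).congr_fun fun K => ?_
  have hK : Summable fun t : SubstIndex.degree ⁻¹' {K} => substCoeff b a t.1 :=
    (NonarchimedeanAddGroup.summable_of_tendsto_cofinite_zero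
      (tendsto_substCoeff hb ha)).subtype _
  rw [compCoeff, ← hK.tsum_mul_right]
  exact tsum_congr fun ⟨t, (ht : t.degree = K)⟩ => by rw [ht]

end RestrictedAnalytic

open RestrictedAnalytic in
/-- Stability under composition: the composition of a restricted-analytic
function with a map all of whose coordinates are restricted-analytic is again
restricted-analytic. -/
theorem restrictedAnalytic_comp (p : ℕ) [Fact p.Prime] (n m : ℕ)
    (F : (Fin n → ℤ_[p]) → Fin m → ℤ_[p])
    (hF : ∀ j : Fin m, RestrictedAnalytic p fun x => F x j)
    (g : (Fin m → ℤ_[p]) → ℤ_[p]) (hg : RestrictedAnalytic p g) :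
    RestrictedAnalytic p (g ∘ F) := by
  obtain ⟨b, hb, hgb⟩ := hg
  choose a ha haF using hF
  simp only [isRestricted_iff_tendsto_cofinite] at hb ha
  have hFx x j : HasSum (fun I => a j I * ∏ i, x i ^ I i) (F x j) := by
    rw [show F x j = _ from haF j x]
    exact (NonarchimedeanAddGroup.summable_of_tendsto_cofinite_zero
      (PadicInt.tendsto_mul_of_tendsto_zero (ha j) _)).hasSum
  refine ⟨compCoeff b a, isRestricted_compCoeff hb ha, fun x => ?_⟩
  rw [Function.comp_apply, hgb]
  exact (hasSum_compCoeff_mul_monomial hb ha x (hFx x)).tsum_eq.symm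
end

section
/- Let p be a prime number and let A be a commutative ℤ_p-algebra that is p-adically complete (the canonical map A → lim_n A/pⁿA is bijective) and such that A/pA is a finite-dimensional 𝔽_p-vector space of dimension D. Then the set of ℤ_p-algebra homomorphisms A → ℤ_p is finite, of cardinality at most D. -/
/-!
Distinct `ℤ_p`-algebra maps `φ₁, …, φₙ : A → ℤ_p` are linearly independent characters (Dedekind),
so the coordinate functionals on the image `M` of `(φᵢ) : A → ℤ_pⁿ` are independent and the free
`ℤ_p`-module `M` has rank at least `n`. Reducing the coordinates of `M` modulo `p` gives a
surjection `A/pA ↠ 𝔽_pⁿ`, whence `pⁿ ≤ |A/pA| = p^D`.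
-/

open Module

theorem AlgHom.linearIndependent_coeFn (R A : Type*) [CommRing R] [IsDomain R] [CommRing A]
    [Algebra R A] : LinearIndependent R (fun f : A →ₐ[R] R => (f : A → R)) :=
  (linearIndependent_monoidHom A R).comp (fun f : A →ₐ[R] R => (f : A →* R))
    fun _ _ h => AlgHom.ext (DFunLike.congr_fun (F := A →* R) h)

theorem card_le_finrank_range_of_linearIndependent_proj_comp {R M ι : Type*} [CommRing R]
    [IsDomain R] [IsPrincipalIdealRing R] [AddCommGroup M] [Module R M] [Fintype ι]
    (F : M →ₗ[R] ι → R) (hF : LinearIndependent R fun i => LinearMap.proj i ∘ₗ F) :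
    Fintype.card ι ≤ finrank R (LinearMap.range F) := by
  let b := Free.chooseBasis R (LinearMap.range F)
  have hcoord : LinearIndependent R fun i => LinearMap.proj i ∘ₗ (LinearMap.range F).subtype :=
    hF.of_comp F.rangeRestrict.dualMap
  calc Fintype.card ι ≤ finrank R (Dual R (LinearMap.range F)) :=
        hcoord.fintype_card_le_finrank
    _ = finrank R (LinearMap.range F) := by
        rw [finrank_eq_card_basis b.dualBasis, finrank_eq_card_basis b]

theorem Ideal.card_le_card_quotient_of_surjective {A B : Type*} [CommRing A] [AddGroup B]
    (I : Ideal A) [Finite (A ⧸ I)] (φ : A →+ B) (hφ : Function.Surjective φ)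
    (hI : ∀ a ∈ I, φ a = 0) : Nat.card B ≤ Nat.card (A ⧸ I) := by
  refine Nat.card_le_card_of_surjective (fun q => φ (Ideal.Quotient.mk_surjective q).choose)
    fun b => ?_
  obtain ⟨a, rfl⟩ := hφ b
  refine ⟨Ideal.Quotient.mk I a, ?_⟩
  have hmem :=
    Ideal.Quotient.eq.mp (Ideal.Quotient.mk_surjective (Ideal.Quotient.mk I a)).choose_spec
  simpa [sub_eq_zero] using hI _ hmem

section PadicInt

variable {p : ℕ} [Fact p.Prime] {A : Type*} [CommRing A] [Algebra ℤ_[p] A]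

theorem pow_finrank_le_card_quotient_span_of_surjective {M : Type*} [AddCommGroup M]
    [Module ℤ_[p] M] [Free ℤ_[p] M] [Module.Finite ℤ_[p] M]
    [Finite (A ⧸ Ideal.span {(p : A)})] (F : A →ₗ[ℤ_[p]] M) (hF : Function.Surjective F) :
    p ^ finrank ℤ_[p] M ≤ Nat.card (A ⧸ Ideal.span {(p : A)}) := by
  let b := Free.chooseBasis ℤ_[p] M
  let reduce : A →+ (Free.ChooseBasisIndex ℤ_[p] M → ZMod p) :=
    (AddMonoidHom.compLeft PadicInt.toZMod.toAddMonoidHom _).comp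
      (b.equivFun.toLinearMap ∘ₗ F).toAddMonoidHom
  have hreduce : Function.Surjective reduce :=
    (ZMod.ringHom_surjective PadicInt.toZMod).comp_left.comp (b.equivFun.surjective.comp hF)
  have hkill : ∀ a ∈ Ideal.span {(p : A)}, reduce a = 0 := by
    intro a ha
    obtain ⟨c, rfl⟩ := Ideal.mem_span_singleton.mp ha
    rw [← nsmul_eq_mul, map_nsmul]
    ext
    simp
  calc p ^ finrank ℤ_[p] M = Nat.card (Free.ChooseBasisIndex ℤ_[p] M → ZMod p) := by
        simp [finrank_eq_card_basis b]
    _ ≤ _ := Ideal.card_le_card_quotient_of_surjective _ reduce hreduce hkill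

theorem pow_card_finset_algHom_le_card_quotient_span [Finite (A ⧸ Ideal.span {(p : A)})]
    (s : Finset (A →ₐ[ℤ_[p]] ℤ_[p])) : p ^ s.card ≤ Nat.card (A ⧸ Ideal.span {(p : A)}) := by
  let F : A →ₗ[ℤ_[p]] s → ℤ_[p] := LinearMap.pi fun f => f.1.toLinearMap
  have hF : LinearIndependent ℤ_[p] fun f : s => LinearMap.proj f ∘ₗ F :=
    LinearIndependent.of_comp (LinearMap.ltoFun ℤ_[p] A ℤ_[p] ℤ_[p])
      ((AlgHom.linearIndependent_coeFn ℤ_[p] A).comp _ Subtype.val_injective)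
  calc p ^ s.card = p ^ Fintype.card s := by rw [Fintype.card_coe]
    _ ≤ p ^ finrank ℤ_[p] (LinearMap.range F) :=
        Nat.pow_le_pow_right (Fact.out : p.Prime).pos
          (card_le_finrank_range_of_linearIndependent_proj_comp F hF)
    _ ≤ _ := pow_finrank_le_card_quotient_span_of_surjective _ F.surjective_rangeRestrict

end PadicInt

theorem card_algHom_le_dim_mod_p_general (p : ℕ) [Fact p.Prime]
    (A : Type*) [CommRing A] [Algebra ℤ_[p] A]
    (D : ℕ) (hdim : Nat.card (A ⧸ Ideal.span {(p : A)}) = p ^ D) :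
    Finite (A →ₐ[ℤ_[p]] ℤ_[p]) ∧ Nat.card (A →ₐ[ℤ_[p]] ℤ_[p]) ≤ D := by
  have hp := (Fact.out : p.Prime).one_lt
  have : Finite (A ⧸ Ideal.span {(p : A)}) :=
    Nat.finite_of_card_ne_zero (by rw [hdim]; positivity)
  have hcard (s : Finset (A →ₐ[ℤ_[p]] ℤ_[p])) : s.card ≤ D :=
    (Nat.pow_le_pow_iff_right hp).mp (hdim ▸ pow_card_finset_algHom_le_card_quotient_span s)
  have hfinite : Finite (A →ₐ[ℤ_[p]] ℤ_[p]) := by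
    by_contra h
    have : Infinite (A →ₐ[ℤ_[p]] ℤ_[p]) := not_finite_iff_infinite.mp h
    obtain ⟨s, hs⟩ := Infinite.exists_subset_card_eq (A →ₐ[ℤ_[p]] ℤ_[p]) (D + 1)
    exact absurd (hcard s) (by omega)
  have := Fintype.ofFinite (A →ₐ[ℤ_[p]] ℤ_[p])
  refine ⟨hfinite, ?_⟩
  simpa only [Nat.card_eq_fintype_card, Finset.card_univ] using hcard Finset.univ

/-- Let `A` be a `p`-adically complete commutative `ℤ_p`-algebra such that
`A/pA` is a finite-dimensional `𝔽_p`-vector space of dimension `D`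
(equivalently, of cardinality `p ^ D`).  Then the set of `ℤ_p`-algebra
homomorphisms `A → ℤ_p` is finite, of cardinality at most `D`. -/
theorem card_algHom_le_dim_mod_p (p : ℕ) [Fact p.Prime]
    (A : Type*) [CommRing A] [Algebra ℤ_[p] A]
    [IsAdicComplete (Ideal.span {(p : A)}) A]
    (D : ℕ) (hdim : Nat.card (A ⧸ Ideal.span {(p : A)}) = p ^ D) :
    Finite (A →ₐ[ℤ_[p]] ℤ_[p]) ∧ Nat.card (A →ₐ[ℤ_[p]] ℤ_[p]) ≤ D :=
  card_algHom_le_dim_mod_p_general p A D hdim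
end
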